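/- For every formula φ of the modal logic 𝓛_m, the satisfaction function φ : Dist(S) → [0,1] is continuous, where Dist(S) carries the topology inherited from ℝ^{|S|}. -/

import Mathlib

open Finset

structure ProbDist (S : Type) [Fintype S] where
  f : S → ℝ
  nonneg : ∀ s, 0 ≤ f s
  sum_one : ∑ s, f s = 1

/-- Probability assigned by a distribution to a set of states. -/
noncomputable def ProbDist.pr {S : Type} [Fintype S] (μ : ProbDist S) (C : Set S) : ℝ :=
  ∑ s, C.indicator μ.f s

/-- μ(A) := Σ_{s : L s = A} μ(s). -/
noncomputable def pOf {S AP : Type} [Fintype S] (L : S → Finset AP) (μ : ProbDist S)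
    (A : Finset AP) : ℝ :=
  μ.pr {s | L s = A}

/-- d_AP(μ,ν) := (1/2) Σ_{A ⊆ AP} |μ(A) − ν(A)|. -/
noncomputable def dAP {S AP : Type} [Fintype S] [Fintype AP] [DecidableEq AP]
    (L : S → Finset AP) (μ ν : ProbDist S) : ℝ :=
  (1 / 2) * ∑ A : Finset AP, |pOf L μ A - pOf L ν A|

/-- A (Segala) probabilistic automaton, image-finite. -/
structure PA (S Act AP : Type) [Fintype S] where
  trans : S → Act → ProbDist S → Prop
  L : S → Finset AP
  imageFinite : ∀ s a, {μ | trans s a μ}.Finite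

def PA.InputEnabled {S Act AP : Type} [Fintype S] (M : PA S Act AP) : Prop :=
  ∀ s a, ∃ μ, M.trans s a μ

noncomputable def PA.probOf {S Act AP : Type} [Fintype S] (M : PA S Act AP)
    (μ : ProbDist S) (A : Finset AP) : ℝ := pOf M.L μ A

/-- Combined transition s --a-->_P μ : μ is a convex combination of one-step successors. -/
def Combined {S Act AP : Type} [Fintype S] (M : PA S Act AP) (s : S) (a : Act)
    (μ : ProbDist S) : Prop :=
  ∃ (n : ℕ) (p : Fin n → ℝ) (ν : Fin n → ProbDist S),
    (∀ i, 0 ≤ p i) ∧ (∑ i, p i = 1) ∧ (∀ i, M.trans s a (ν i)) ∧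
    (∀ t, μ.f t = ∑ i, p i * (ν i).f t)

/-- Lifted transition μ --a--> μ' between distributions. -/
def Lifted {S Act AP : Type} [Fintype S] (M : PA S Act AP) (μ : ProbDist S) (a : Act)
    (μ' : ProbDist S) : Prop :=
  ∃ k : S → ProbDist S, (∀ s, 0 < μ.f s → Combined M s a (k s)) ∧
    (∀ t, μ'.f t = ∑ s, μ.f s * (k s).f t)

/-- ProbDist S carries the topology inherited from ℝ^{|S|}. -/
noncomputable instance {S : Type} [Fintype S] : TopologicalSpace (ProbDist S) :=
  TopologicalSpace.induced (fun μ : ProbDist S => μ.f) inferInstance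

/-- Formulas of the modal logic 𝓛_m. -/
inductive Fml (AP Act : Type) : Type 1
  | atom : Finset (Finset AP) → Fml AP Act
  | oplus : Fml AP Act → Set.Icc (0 : ℝ) 1 → Fml AP Act
  | neg : Fml AP Act → Fml AP Act
  | conj : (I : Type) → (I → Fml AP Act) → Fml AP Act
  | dia : Act → Fml AP Act → Fml AP Act

/-- Discounted satisfaction function of a formula. -/
noncomputable def sat {S Act AP : Type} [Fintype S] (M : PA S Act AP) (γ : ℝ) :
    Fml AP Act → ProbDist S → ℝ
  | .atom B, μ => ∑ A ∈ B, M.probOf μ A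
  | .oplus φ p, μ => min (sat M γ φ μ + (p : ℝ)) 1
  | .neg φ, μ => 1 - sat M γ φ μ
  | .conj _ φs, μ => ⨅ i, sat M γ (φs i) μ
  | .dia a φ, μ => ⨆ μ' ∈ {x | Lifted M μ a x}, γ * sat M γ φ μ'

/-!
Every satisfaction function is 1-Lipschitz for the ℓ¹ distance `∑ s, |μ s - ν s|`, which gives
continuity. The only non-routine case is `⟨a⟩φ`: input-enabledness lets a lifted transition
`μ --a--> μ' = μ.bind k` be taken with a kernel `k` that is a combined transition at every
state, and then `ν --a--> ν.bind k`, while pushing two distributions through the same kernel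
does not increase their ℓ¹ distance.
-/

open Filter Topology

lemma iInf_le_iInf_add {ι : Sort*} {f g : ι → ℝ} {c : ℝ} (hf : BddBelow (Set.range f))
    (hc : 0 ≤ c) (h : ∀ i, f i ≤ g i + c) : ⨅ i, f i ≤ (⨅ i, g i) + c := by
  rcases isEmpty_or_nonempty ι with hι | hι
  · simpa [Real.iInf_of_isEmpty] using hc
  · rw [← sub_le_iff_le_add]
    exact le_ciInf fun i => sub_le_iff_le_add.2 ((ciInf_le hf i).trans (h i))

/-- In `ℝ`, an empty supremum is `0`, whence the nonnegativity assumptions. -/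
lemma biSup_le_biSup_add {α : Type*} {s t : Set α} {g h : α → ℝ} {c : ℝ}
    (hh : ∀ y, 0 ≤ h y) (hbdd : BddAbove (Set.range h)) (hc : 0 ≤ c)
    (H : ∀ x ∈ s, ∃ y ∈ t, g x ≤ h y + c) : ⨆ x ∈ s, g x ≤ (⨆ y ∈ t, h y) + c := by
  obtain ⟨B, hB⟩ := hbdd
  have hsup_nonneg : 0 ≤ ⨆ y ∈ t, h y :=
    Real.iSup_nonneg fun y => Real.iSup_nonneg fun _ => hh y
  have le_sup : ∀ y ∈ t, h y ≤ ⨆ y ∈ t, h y := fun y hy =>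
    le_ciSup_of_le ⟨B, by
      rintro _ ⟨z, rfl⟩
      exact Real.iSup_le (fun _ => hB ⟨z, rfl⟩) ((hh z).trans (hB ⟨z, rfl⟩))⟩ y
      (by rw [ciSup_pos hy])
  have hrhs_nonneg := add_nonneg hsup_nonneg hc
  refine Real.iSup_le (fun x => Real.iSup_le (fun hx => ?_) hrhs_nonneg) hrhs_nonneg
  obtain ⟨y, hy, hxy⟩ := H x hx
  linarith [le_sup y hy]

namespace ProbDist

variable {S : Type} [Fintype S]

noncomputable def l1Dist (μ ν : ProbDist S) : ℝ :=
  ∑ s, |μ.f s - ν.f s|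

lemma l1Dist_nonneg (μ ν : ProbDist S) : 0 ≤ l1Dist μ ν :=
  sum_nonneg fun _ _ => abs_nonneg _

lemma l1Dist_comm (μ ν : ProbDist S) : l1Dist μ ν = l1Dist ν μ :=
  sum_congr rfl fun _ _ => abs_sub_comm _ _

lemma pr_nonneg (μ : ProbDist S) (C : Set S) : 0 ≤ μ.pr C :=
  sum_nonneg fun s _ => Set.indicator_nonneg (fun s _ => μ.nonneg s) s

lemma pr_le_one (μ : ProbDist S) (C : Set S) : μ.pr C ≤ 1 :=
  (sum_le_sum fun s _ => Set.indicator_le_self' (fun s _ => μ.nonneg s) s).trans_eq μ.sum_one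

lemma pr_le_pr_add_l1Dist (μ ν : ProbDist S) (C : Set S) : μ.pr C ≤ ν.pr C + l1Dist μ ν := by
  rw [pr, pr, ← sub_le_iff_le_add', ← sum_sub_distrib, ← Set.indicator_sub]
  exact sum_le_sum fun s _ => Set.indicator_apply_le' (fun _ => le_abs_self _) fun _ => abs_nonneg _

lemma continuous_l1Dist_left (ν : ProbDist S) : Continuous fun μ : ProbDist S => l1Dist μ ν :=
  continuous_finsetSum _ fun s _ =>
    (((continuous_apply s).comp (continuous_induced_dom (f := ProbDist.f))).sub
      continuous_const).abs

lemma continuous_of_le_add_l1Dist {F : ProbDist S → ℝ}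
    (hF : ∀ μ ν, F μ ≤ F ν + l1Dist μ ν) : Continuous F := by
  refine continuous_iff_continuousAt.2 fun μ => ?_
  have hd : Tendsto (fun ν => l1Dist ν μ) (𝓝 μ) (𝓝 0) := by
    simpa [l1Dist] using (continuous_l1Dist_left μ).tendsto μ
  have hlip : ∀ ν, ‖F ν - F μ‖ ≤ l1Dist ν μ := fun ν =>
    abs_sub_le_iff.2 ⟨by linarith [hF ν μ], by linarith [hF μ ν, l1Dist_comm μ ν]⟩
  simpa [ContinuousAt] using (squeeze_zero_norm hlip hd).add_const (F μ)

noncomputable def bind (μ : ProbDist S) (k : S → ProbDist S) : ProbDist S where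
  f t := ∑ s, μ.f s * (k s).f t
  nonneg t := sum_nonneg fun s _ => mul_nonneg (μ.nonneg s) ((k s).nonneg t)
  sum_one := by
    rw [sum_comm]
    simp only [← mul_sum, ProbDist.sum_one, mul_one]

lemma l1Dist_bind_le (μ ν : ProbDist S) (k : S → ProbDist S) :
    l1Dist (μ.bind k) (ν.bind k) ≤ l1Dist μ ν :=
  calc ∑ t, |∑ s, μ.f s * (k s).f t - ∑ s, ν.f s * (k s).f t|
      = ∑ t, |∑ s, (μ.f s - ν.f s) * (k s).f t| := by
        simp only [← sum_sub_distrib, sub_mul]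
    _ ≤ ∑ t, ∑ s, |μ.f s - ν.f s| * (k s).f t := by
        refine sum_le_sum fun t _ => (abs_sum_le_sum_abs _ _).trans_eq ?_
        simp only [abs_mul, abs_of_nonneg ((k _).nonneg t)]
    _ = l1Dist μ ν := by
        rw [sum_comm]
        simp only [← mul_sum, ProbDist.sum_one, mul_one]
        rfl

end ProbDist

open ProbDist

section Transitions

variable {S Act AP : Type} [Fintype S] {M : PA S Act AP} {a : Act}

lemma PA.InputEnabled.exists_combined (hM : M.InputEnabled) (s : S) (a : Act) :
    ∃ ρ, Combined M s a ρ := by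
  obtain ⟨ρ, hρ⟩ := hM s a
  exact ⟨ρ, 1, fun _ => 1, fun _ => ρ, fun _ => zero_le_one, by simp, fun _ => hρ,
    fun t => by simp⟩

lemma lifted_bind {k : S → ProbDist S} (hk : ∀ s, Combined M s a (k s)) (μ : ProbDist S) :
    Lifted M μ a (μ.bind k) :=
  ⟨k, fun s _ => hk s, fun _ => rfl⟩

lemma Lifted.exists_kernel (hM : M.InputEnabled) {μ μ' : ProbDist S} (h : Lifted M μ a μ') :
    ∃ k : S → ProbDist S, (∀ s, Combined M s a (k s)) ∧ μ'.f = (μ.bind k).f := by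
  classical
  obtain ⟨k, hk, hμ'⟩ := h
  choose default hdefault using fun s => hM.exists_combined s a
  refine ⟨fun s => if 0 < μ.f s then k s else default s, fun s => ?_, funext fun t => ?_⟩
  · by_cases hs : 0 < μ.f s
    · simpa [hs] using hk s hs
    · simpa [hs] using hdefault s
  · refine (hμ' t).trans (sum_congr rfl fun s _ => ?_)
    by_cases hs : 0 < μ.f s
    · simp [hs]
    · simp [le_antisymm (not_lt.1 hs) (μ.nonneg s)]

lemma Lifted.exists_lifted_l1Dist_le (hM : M.InputEnabled) {μ μ' : ProbDist S}
    (h : Lifted M μ a μ') (ν : ProbDist S) :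
    ∃ ν', Lifted M ν a ν' ∧ l1Dist μ' ν' ≤ l1Dist μ ν := by
  obtain ⟨k, hk, hμ'⟩ := h.exists_kernel hM
  refine ⟨ν.bind k, lifted_bind hk ν, ?_⟩
  have : l1Dist μ' (ν.bind k) = l1Dist (μ.bind k) (ν.bind k) := by
    simp only [l1Dist, hμ']
  exact this.trans_le (l1Dist_bind_le μ ν k)

end Transitions

section Satisfaction

variable {S Act AP : Type} [Fintype S] (M : PA S Act AP) {γ : ℝ}

lemma sat_atom (B : Finset (Finset AP)) (μ : ProbDist S) :
    sat M γ (.atom B) μ = μ.pr {s | M.L s ∈ B} := by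
  classical
  change ∑ A ∈ B, ∑ s, Set.indicator {s | M.L s = A} μ.f s = ∑ s, _
  rw [sum_comm]
  refine sum_congr rfl fun s _ => ?_
  simp [Set.indicator_apply]

lemma sat_mem_Icc (hγ0 : 0 ≤ γ) (hγ1 : γ ≤ 1) (φ : Fml AP Act) (μ : ProbDist S) :
    sat M γ φ μ ∈ Set.Icc 0 1 := by
  induction φ generalizing μ with
  | atom B =>
    rw [sat_atom]
    exact ⟨pr_nonneg μ _, pr_le_one μ _⟩
  | oplus φ p ih =>
    exact ⟨le_min (add_nonneg (ih μ).1 p.2.1) zero_le_one, min_le_right _ _⟩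
  | neg φ ih =>
    exact ⟨sub_nonneg.2 (ih μ).2, sub_le_self _ (ih μ).1⟩
  | conj I φs ih =>
    refine ⟨Real.iInf_nonneg fun i => (ih i μ).1, ?_⟩
    rcases isEmpty_or_nonempty I with hI | ⟨⟨i⟩⟩
    · exact (Real.iInf_of_isEmpty _).trans_le zero_le_one
    · exact ciInf_le_of_le ⟨0, by rintro _ ⟨j, rfl⟩; exact (ih j μ).1⟩ i (ih i μ).2
  | dia a φ ih =>
    exact ⟨Real.iSup_nonneg fun μ' => Real.iSup_nonneg fun _ => mul_nonneg hγ0 (ih μ').1,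
      Real.iSup_le (fun μ' => Real.iSup_le (fun _ => mul_le_one₀ hγ1 (ih μ').1 (ih μ').2)
        zero_le_one) zero_le_one⟩

lemma sat_le_sat_add_l1Dist (hM : M.InputEnabled) (hγ0 : 0 ≤ γ) (hγ1 : γ ≤ 1)
    (φ : Fml AP Act) (μ ν : ProbDist S) : sat M γ φ μ ≤ sat M γ φ ν + l1Dist μ ν := by
  induction φ generalizing μ ν with
  | atom B =>
    simpa only [sat_atom] using pr_le_pr_add_l1Dist μ ν _
  | oplus φ p ih =>
    exact (min_le_min (by linarith [ih μ ν]) (le_add_of_nonneg_right (l1Dist_nonneg μ ν))).trans_eq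
      (min_add_add_right _ _ _)
  | neg φ ih =>
    change 1 - _ ≤ 1 - _ + _
    linarith [ih ν μ, l1Dist_comm μ ν]
  | conj I φs ih =>
    exact iInf_le_iInf_add ⟨0, by rintro _ ⟨i, rfl⟩; exact (sat_mem_Icc M hγ0 hγ1 _ μ).1⟩
      (l1Dist_nonneg μ ν) fun i => ih i μ ν
  | dia a φ ih =>
    have hbound := fun ρ => sat_mem_Icc M hγ0 hγ1 φ ρ
    refine biSup_le_biSup_add (fun ρ => mul_nonneg hγ0 (hbound ρ).1)
      ⟨1, by rintro _ ⟨ρ, rfl⟩; exact mul_le_one₀ hγ1 (hbound ρ).1 (hbound ρ).2⟩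
      (l1Dist_nonneg μ ν) fun μ' hμ' => ?_
    obtain ⟨ν', hν', hdist⟩ := Lifted.exists_lifted_l1Dist_le hM hμ' ν
    refine ⟨ν', hν', ?_⟩
    calc γ * sat M γ φ μ' ≤ γ * (sat M γ φ ν' + l1Dist μ' ν') :=
          mul_le_mul_of_nonneg_left (ih μ' ν') hγ0
      _ ≤ γ * sat M γ φ ν' + l1Dist μ ν := by
          rw [mul_add]
          gcongr
          exact (mul_le_of_le_one_left (l1Dist_nonneg μ' ν') hγ1).trans hdist

end Satisfaction

theorem stmt13 {S Act AP : Type} [Fintype S] (M : PA S Act AP) (hM : M.InputEnabled)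
    (γ : ℝ) (hγ0 : 0 < γ) (hγ1 : γ ≤ 1) (φ : Fml AP Act) :
    Continuous (sat M γ φ) :=
  continuous_of_le_add_l1Dist (sat_le_sat_add_l1Dist M hM hγ0.le hγ1 φ)
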